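/- Let x, y be diagram expressions all of whose terms have combinatorial order at most 1 (i.e. each term is combinatorially negligible or of combinatorial order 1). If x ≐ y, then A·x ≐ A·y. Moreover, if x₁,…,x_t, y₁,…,y_t are diagram expressions, each with all terms of combinatorial order at most 1, satisfying x_i ≐ y_i for all i ∈ [t], then f(x₁,…,x_t) ≐ f(y₁,…,y_t) for every polynomial f : ℝ^t → ℝ independent of n applied componentwise, where both sides are expanded in the diagram basis by the stated operation rules. -/

import Mathlib

set_option linter.unusedVariables false

open scoped Classical BigOperators

noncomputable section

/-! ### Fourier diagrams

A Fourier diagram is a finite rooted multigraph, possibly carrying additional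
"2-labeled" edges (`edges2`).  A plain (unlabeled) Fourier diagram is one with
`edges2 = 0`. -/

structure Diagram where
  V : Type
  fintypeV : Fintype V
  decEqV : DecidableEq V
  root : V
  edges : Multiset (Sym2 V)
  edges2 : Multiset (Sym2 V)

attribute [instance] Diagram.fintypeV Diagram.decEqV

/-- Symmetrized evaluation of a matrix entry on an unordered pair (agrees with
`A (φ a) (φ b)` whenever `A` is symmetric). -/
def sym2val {V : Type} {N : ℕ} (A : Matrix (Fin N) (Fin N) ℝ) (φ : V → Fin N) : Sym2 V → ℝ :=
  Sym2.lift ⟨fun a b => (A (φ a) (φ b) + A (φ b) (φ a)) / 2, fun a b => by ring⟩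

/-- Entry `i` of the vector `Z_α`: the sum over injective embeddings `φ` of the
vertices with `φ(root) = i` of the product of matrix entries over the edges
(a 2-labeled edge contributes `A² - 1/N`). -/
def Zv {N : ℕ} (A : Matrix (Fin N) (Fin N) ℝ) (α : Diagram) (i : Fin N) : ℝ :=
  ∑ φ : α.V → Fin N,
    if Function.Injective φ ∧ φ α.root = i then
      (α.edges.map (sym2val A φ)).prod *
        (α.edges2.map fun e => sym2val A φ e ^ 2 - 1 / (N : ℝ)).prod
    else 0

namespace Diagram

/-- All edges, with 2-labeled edges counted once. -/
def allE (α : Diagram) : Multiset (Sym2 α.V) := α.edges + α.edges2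

/-- No vertex other than the root is isolated. -/
def NoIsolated (α : Diagram) : Prop := ∀ v : α.V, v ≠ α.root → ∃ e ∈ α.allE, v ∈ e

/-- `|E(α)|`, counting 2-labeled edges twice. -/
def nE (α : Diagram) : ℕ := Multiset.card α.edges + 2 * Multiset.card α.edges2

/-- `I(α)`: non-root vertices all of whose incident edges have multiplicity `≥ 2`
or are self-loops (2-labeled edges being treated as single ordinary edges). -/
def I (α : Diagram) : Finset α.V :=
  Finset.univ.filter fun v =>
    v ≠ α.root ∧ ∀ e ∈ α.allE, v ∈ e → (2 ≤ α.allE.count e ∨ e.IsDiag)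

/-- The combinatorial quantity `|V(α)| - 1 - |E(α)| + |I(α)|`. -/
def Dval (α : Diagram) : ℤ :=
  (Fintype.card α.V : ℤ) - 1 - (α.nE : ℤ) + (α.I.card : ℤ)

/-- The underlying simple graph of a diagram. -/
def graph (α : Diagram) : SimpleGraph α.V := SimpleGraph.fromEdgeSet {e | e ∈ α.allE}

/-- Connectivity of the diagram (as a multigraph). -/
def Conn (α : Diagram) : Prop := α.graph.Connected

/-- A proper diagram: no repeated edges, no self-loops and no 2-labeled edges. -/
def Proper (α : Diagram) : Prop :=
  α.edges.Nodup ∧ (∀ e ∈ α.edges, ¬ e.IsDiag) ∧ α.edges2 = 0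

/-- A (rooted) tree diagram: an element of `𝒯`. -/
def IsTree (α : Diagram) : Prop := α.Proper ∧ α.graph.Connected ∧ α.graph.IsAcyclic

/-- Degree of the root (as a multigraph). -/
def rootDeg (α : Diagram) : ℕ := Multiset.card (α.edges.filter fun e => α.root ∈ e)

/-- Membership in `𝒮`: a rooted tree whose root has degree exactly 1. -/
def InS (α : Diagram) : Prop := α.IsTree ∧ α.rootDeg = 1

/-- The root has degree exactly one, with (unique) neighbour `c`. -/
def RootDeg1 (α : Diagram) : Prop :=
  ∃ c : α.V, c ≠ α.root ∧ α.edges.filter (fun e => α.root ∈ e) = {s(α.root, c)}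

end Diagram

/-- Isomorphism of rooted diagrams. -/
def DiagIso (α β : Diagram) : Prop :=
  ∃ g : α.V ≃ β.V, g α.root = β.root ∧ α.edges.map (Sym2.map ⇑g) = β.edges ∧
    α.edges2.map (Sym2.map ⇑g) = β.edges2

/-- `|Aut(α)|`: the number of root-fixing automorphisms of `α`. -/
def autCard (α : Diagram) : ℕ :=
  Nat.card {g : Equiv.Perm α.V // g α.root = α.root ∧
    α.edges.map (Sym2.map ⇑g) = α.edges ∧ α.edges2.map (Sym2.map ⇑g) = α.edges2}

/-! ### Combinatorial negligibility and asymptotic equality `≐` -/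

/-- `a = Θ(n^{-j/2})`. -/
def IsThetaHalf (a : ℕ → ℝ) (j : ℕ) : Prop :=
  ∃ c₁ c₂ : ℝ, 0 < c₁ ∧ 0 < c₂ ∧ ∀ n : ℕ, 1 ≤ n →
    c₁ * (n : ℝ) ^ (-(j : ℝ) / 2) ≤ |a n| ∧ |a n| ≤ c₂ * (n : ℝ) ^ (-(j : ℝ) / 2)

/-- The term `a_n · Z_α` is combinatorially negligible. -/
def NegligibleTerm (a : ℕ → ℝ) (α : Diagram) : Prop :=
  (∀ n, a n = 0) ∨ ∃ j : ℕ, IsThetaHalf a j ∧ α.Dval ≤ (j : ℤ) - 1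

/-- The term `a_n · Z_α` has combinatorial order 1. -/
def Order1Term (a : ℕ → ℝ) (α : Diagram) : Prop :=
  ∃ j : ℕ, IsThetaHalf a j ∧ α.Dval = (j : ℤ)

/-- A (vector-valued) diagram expression: a finite sum of terms `a_n · Z_α`. -/
abbrev DiagExpr : Type 1 := List ((ℕ → ℝ) × Diagram)

def DiagExpr.eval (z : DiagExpr) {N : ℕ} (A : Matrix (Fin N) (Fin N) ℝ) (i : Fin N) : ℝ :=
  (z.map fun p => p.1 N * Zv A p.2 i).sum

def DiagExpr.Negligible (z : DiagExpr) : Prop := ∀ p ∈ z, NegligibleTerm p.1 p.2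

/-- Asymptotic equality `x ≐ y` of two vector-valued quantities: the difference is
(identically, for every symmetric input matrix) a sum of combinatorially
negligible diagram terms. -/
def AsympEqV (x y : (N : ℕ) → Matrix (Fin N) (Fin N) ℝ → Fin N → ℝ) : Prop :=
  ∃ z : DiagExpr, DiagExpr.Negligible z ∧
    ∀ (N : ℕ) (A : Matrix (Fin N) (Fin N) ℝ), A.IsSymm → ∀ i : Fin N,
      x N A i - y N A i = DiagExpr.eval z A i

/-- `≐` for diagram expressions. -/
def AsympEqE (x y : DiagExpr) : Prop :=
  AsympEqV (fun _ A i => DiagExpr.eval x A i) (fun _ A i => DiagExpr.eval y A i)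

/-! ### Scalar diagrams -/

structure SDiagram where
  V : Type
  fintypeV : Fintype V
  decEqV : DecidableEq V
  edges : Multiset (Sym2 V)
  edges2 : Multiset (Sym2 V)

attribute [instance] SDiagram.fintypeV SDiagram.decEqV

def Zs {N : ℕ} (A : Matrix (Fin N) (Fin N) ℝ) (α : SDiagram) : ℝ :=
  ∑ φ : α.V → Fin N,
    if Function.Injective φ then
      (α.edges.map (sym2val A φ)).prod *
        (α.edges2.map fun e => sym2val A φ e ^ 2 - 1 / (N : ℝ)).prod
    else 0

namespace SDiagram

def allE (α : SDiagram) : Multiset (Sym2 α.V) := α.edges + α.edges2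
def NoIsolated (α : SDiagram) : Prop := ∀ v : α.V, ∃ e ∈ α.allE, v ∈ e
def nE (α : SDiagram) : ℕ := Multiset.card α.edges + 2 * Multiset.card α.edges2
def I (α : SDiagram) : Finset α.V :=
  Finset.univ.filter fun v => ∀ e ∈ α.allE, v ∈ e → (2 ≤ α.allE.count e ∨ e.IsDiag)
def Dval (α : SDiagram) : ℤ := (Fintype.card α.V : ℤ) - (α.nE : ℤ) + (α.I.card : ℤ)
def graph (α : SDiagram) : SimpleGraph α.V := SimpleGraph.fromEdgeSet {e | e ∈ α.allE}
def Proper (α : SDiagram) : Prop :=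
  α.edges.Nodup ∧ (∀ e ∈ α.edges, ¬ e.IsDiag) ∧ α.edges2 = 0
def IsTree (α : SDiagram) : Prop := α.Proper ∧ α.graph.Connected ∧ α.graph.IsAcyclic

end SDiagram

def SDiagIso (α β : SDiagram) : Prop :=
  ∃ g : α.V ≃ β.V, α.edges.map (Sym2.map ⇑g) = β.edges ∧
    α.edges2.map (Sym2.map ⇑g) = β.edges2

def autCardS (α : SDiagram) : ℕ :=
  Nat.card {g : Equiv.Perm α.V //
    α.edges.map (Sym2.map ⇑g) = α.edges ∧ α.edges2.map (Sym2.map ⇑g) = α.edges2}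

def NegligibleTermS (a : ℕ → ℝ) (α : SDiagram) : Prop :=
  (∀ n, a n = 0) ∨ ∃ j : ℕ, IsThetaHalf a j ∧ α.Dval ≤ (j : ℤ) - 1

abbrev SDiagExpr : Type 1 := List ((ℕ → ℝ) × SDiagram)

def SDiagExpr.eval (z : SDiagExpr) {N : ℕ} (A : Matrix (Fin N) (Fin N) ℝ) : ℝ :=
  (z.map fun p => p.1 N * Zs A p.2).sum

def SDiagExpr.Negligible (z : SDiagExpr) : Prop := ∀ p ∈ z, NegligibleTermS p.1 p.2

/-- Asymptotic equality `x ≐ y` of two scalar quantities. -/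
def AsympEqS (x y : (N : ℕ) → Matrix (Fin N) (Fin N) ℝ → ℝ) : Prop :=
  ∃ z : SDiagExpr, SDiagExpr.Negligible z ∧
    ∀ (N : ℕ) (A : Matrix (Fin N) (Fin N) ℝ), A.IsSymm → x N A - y N A = SDiagExpr.eval z A

/-! ### The Wigner matrix model -/

/-- Subgaussian distribution on `ℝ` (definition from the paper). -/
def Subgaussian (μ : MeasureTheory.Measure ℝ) : Prop :=
  ∃ C : ℝ, 0 < C ∧ ∀ q : ℕ, ∫ x, |x| ^ q ∂μ ≤ C ^ q * (q : ℝ) ^ ((q : ℝ) / 2)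

/-- The matrix model: `A(n)` is a random symmetric `n × n` matrix whose entries are
independent up to symmetry, with `√n · A_{ii} ~ μ₀` and `√n · A_{ij} ~ μ` (`i ≠ j`),
where `μ, μ₀` are subgaussian, centered, and `μ` has unit variance. -/
structure MatrixModel where
  Ω : Type
  [mΩ : MeasurableSpace Ω]
  P : MeasureTheory.Measure Ω
  [probP : MeasureTheory.IsProbabilityMeasure P]
  μ : MeasureTheory.Measure ℝ
  μ₀ : MeasureTheory.Measure ℝ
  [probμ : MeasureTheory.IsProbabilityMeasure μ]
  [probμ₀ : MeasureTheory.IsProbabilityMeasure μ₀]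
  subgμ : Subgaussian μ
  subgμ₀ : Subgaussian μ₀
  mean_zero : ∫ x, x ∂μ = 0
  mean_zero₀ : ∫ x, x ∂μ₀ = 0
  var_one : ∫ x, x ^ 2 ∂μ = 1
  A : (n : ℕ) → Ω → Matrix (Fin n) (Fin n) ℝ
  meas : ∀ (n : ℕ) (i j : Fin n), Measurable fun ω => A n ω i j
  symm : ∀ (n : ℕ) (ω : Ω), (A n ω).IsSymm
  indep : ∀ n : ℕ, ProbabilityTheory.iIndepFun
    (fun (p : {p : Fin n × Fin n // p.1 ≤ p.2}) (ω : Ω) => A n ω p.1.1 p.1.2) P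
  dist_diag : ∀ (n : ℕ) (i : Fin n),
    MeasureTheory.Measure.map (fun ω => Real.sqrt n * A n ω i i) P = μ₀
  dist_off : ∀ (n : ℕ) (i j : Fin n), i ≠ j →
    MeasureTheory.Measure.map (fun ω => Real.sqrt n * A n ω i j) P = μ

attribute [instance] MatrixModel.mΩ MatrixModel.probP MatrixModel.probμ MatrixModel.probμ₀

open MeasureTheory ProbabilityTheory Filter

/-! ### Branches of trees, Hermite polynomials, and the asymptotic Gaussian space -/

/-- The diagram's graph with all edges incident to the root removed. -/
def Diagram.offRoot (α : Diagram) : SimpleGraph α.V := α.graph.deleteEdges {e | α.root ∈ e}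

/-- The set of vertices belonging to the branch hanging at a root-neighbour `c`. -/
def Diagram.branchSet (α : Diagram) (c : α.V) : Set α.V := {v | α.offRoot.Reachable c v}

/-- The branch of `α` at a root-neighbour `c`, as a rooted diagram (the root is kept). -/
def Diagram.branchAt (α : Diagram) (c : α.V) : Diagram where
  V := {v : α.V // v = α.root ∨ v ∈ α.branchSet c}
  fintypeV := Fintype.ofFinite _
  decEqV := inferInstance
  root := ⟨α.root, Or.inl rfl⟩
  edges := (α.edges.filter fun e => ∃ v, v ∈ e ∧ v ∈ α.branchSet c).map
    (Sym2.map fun v =>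
      if h : v = α.root ∨ v ∈ α.branchSet c then
        (⟨v, h⟩ : {v : α.V // v = α.root ∨ v ∈ α.branchSet c})
      else ⟨α.root, Or.inl rfl⟩)
  edges2 := (α.edges2.filter fun e => ∃ v, v ∈ e ∧ v ∈ α.branchSet c).map
    (Sym2.map fun v =>
      if h : v = α.root ∨ v ∈ α.branchSet c then
        (⟨v, h⟩ : {v : α.V // v = α.root ∨ v ∈ α.branchSet c})
      else ⟨α.root, Or.inl rfl⟩)

/-- `d_σ(τ)`: the number of branches of the root of `τ` isomorphic to `σ ∈ 𝒮`. -/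
def dcount (τ σ : Diagram) : ℕ :=
  Nat.card {c : τ.V // τ.graph.Adj τ.root c ∧ DiagIso (τ.branchAt c) σ}

/-- The monic orthogonal (generalized Hermite) polynomials for `N(0, v)`:
`h_0 = 1`, `h_1 = x`, `h_{k+2} = x·h_{k+1} - v·(k+1)·h_k`. -/
def hermiteVar (v : ℝ) : ℕ → ℝ → ℝ
  | 0, _ => 1
  | 1, x => x
  | k + 2, x => x * hermiteVar v (k + 1) x - v * ((k : ℝ) + 1) * hermiteVar v k x

/-- Given an enumeration `rep` of representatives of the isomorphism classes of `𝒮`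
and a family `G` of corresponding (Gaussian) random variables, the asymptotic random
variable `Z_τ^∞ = ∏_σ h_{d_σ(τ)}(Z_σ^∞; |Aut σ|)` attached to a rooted tree `τ ∈ 𝒯`. -/
def ZinfTree {Ω' : Type} (rep : ℕ → Diagram) (G : ℕ → Ω' → ℝ) (τ : Diagram) (ω : Ω') : ℝ :=
  ∏ᶠ m : ℕ, hermiteVar (autCard (rep m)) (dcount τ (rep m)) (G m ω)

/-- `τ⁺`: extend the root by one edge. -/
def plusD (τ : Diagram) : Diagram where
  V := Option τ.V
  fintypeV := inferInstance
  decEqV := inferInstance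
  root := none
  edges := τ.edges.map (Sym2.map fun v => (some v : Option τ.V)) +
    {s((none : Option τ.V), some τ.root)}
  edges2 := τ.edges2.map (Sym2.map fun v => (some v : Option τ.V))

/-- `σ⁻` for a root of degree 1 with neighbour `c`: delete the root and its unique
edge, re-rooting at `c`. -/
def minusDAux (τ : Diagram) (c : τ.V) (hc : c ≠ τ.root) : Diagram where
  V := {v : τ.V // v ≠ τ.root}
  fintypeV := Fintype.ofFinite _
  decEqV := inferInstance
  root := ⟨c, hc⟩
  edges := (τ.edges.filter fun e => τ.root ∉ e).map
    (Sym2.map fun v => if h : v = τ.root then (⟨c, hc⟩ : {v : τ.V // v ≠ τ.root}) else ⟨v, h⟩)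
  edges2 := (τ.edges2.filter fun e => τ.root ∉ e).map
    (Sym2.map fun v => if h : v = τ.root then (⟨c, hc⟩ : {v : τ.V // v ≠ τ.root}) else ⟨v, h⟩)

/-- `τ⁻` (total version; meaningful when the root has degree exactly one). -/
def minusD (τ : Diagram) : Diagram :=
  if h : τ.RootDeg1 then minusDAux τ h.choose h.choose_spec.1 else τ

/-! ### Removal of hanging double edges -/

/-- Remove a hanging double edge `{u, v}` (where `v` is a hanging non-root vertex)
together with the vertex `v`. -/
def rmHDE (α : Diagram) (u v : α.V) (huv : u ≠ v) (hv : v ≠ α.root) : Diagram where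
  V := {w : α.V // w ≠ v}
  fintypeV := Fintype.ofFinite _
  decEqV := inferInstance
  root := ⟨α.root, fun h => hv h.symm⟩
  edges := (α.edges - Multiset.replicate 2 s(u, v)).map
    (Sym2.map fun w => if h : w = v then (⟨u, huv⟩ : {w : α.V // w ≠ v}) else ⟨w, h⟩)
  edges2 := α.edges2.map
    (Sym2.map fun w => if h : w = v then (⟨u, huv⟩ : {w : α.V // w ≠ v}) else ⟨w, h⟩)

/-- Replace a hanging double edge `{u, v}` by a single 2-labeled edge. -/
def relabelHDE (α : Diagram) (u v : α.V) : Diagram :=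
  { α with edges := α.edges - Multiset.replicate 2 s(u, v), edges2 := α.edges2 + {s(u, v)} }

/-- One step of deleting a hanging double edge (up to isomorphism). -/
def StepRemove (α β : Diagram) : Prop :=
  ∃ (u v : α.V) (huv : u ≠ v) (hv : v ≠ α.root),
    α.edges.count s(u, v) = 2 ∧ (∀ e ∈ α.edges, v ∈ e → e = s(u, v)) ∧
    (∀ e ∈ α.edges2, v ∉ e) ∧ DiagIso β (rmHDE α u v huv hv)

/-- The asymptotic random variable `Z_α^∞` of a connected diagram `α`: if repeatedly
deleting hanging double edges transforms `α` into a rooted tree `τ ∈ 𝒯` then it is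
`Z_τ^∞`, and otherwise it is `0`. -/
def ZinfGen {Ω' : Type} (rep : ℕ → Diagram) (G : ℕ → Ω' → ℝ) (α : Diagram) : Ω' → ℝ :=
  if h : ∃ τ : Diagram, Relation.ReflTransGen StepRemove α τ ∧ τ.IsTree then
    ZinfTree rep G h.choose
  else fun _ => 0

/-! ### Tree expressions -/

/-- A tree(-diagram) expression with coefficients independent of `n`. -/
abbrev TreeExpr : Type 1 := List (ℝ × Diagram)

def TreeExpr.eval (x : TreeExpr) {N : ℕ} (A : Matrix (Fin N) (Fin N) ℝ) (i : Fin N) : ℝ :=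
  (x.map fun p => p.1 * Zv A p.2 i).sum

/-- The asymptotic state attached to a tree expression. -/
def TreeExpr.inf {Ω' : Type} (rep : ℕ → Diagram) (G : ℕ → Ω' → ℝ) (x : TreeExpr) (ω : Ω') : ℝ :=
  (x.map fun p => p.1 * ZinfTree rep G p.2 ω).sum

/-- The linear operator `⁺` on tree expressions. -/
def TreeExpr.plusE (x : TreeExpr) : TreeExpr := x.map fun p => (p.1, plusD p.2)

/-- The linear operator `⁻` on tree expressions (trees whose root does not have
degree one are sent to `0`). -/
def TreeExpr.minusE (x : TreeExpr) : TreeExpr :=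
  x.flatMap fun p =>
    if h : p.2.RootDeg1 then [(p.1, minusDAux p.2 h.choose h.choose_spec.1)] else []

/-- The asymptotic Gaussian space: an enumeration `rep` of pairwise non-isomorphic
representatives of all isomorphism classes of `𝒮`, together with a family `G m i`
(`m` = class, `i` = coordinate) of independent centered Gaussians with variances
`|Aut(rep m)|`. -/
structure SRep {Ω' : Type} [MeasurableSpace Ω'] (P' : Measure Ω') (rep : ℕ → Diagram)
    (G : ℕ → ℕ → Ω' → ℝ) : Prop where
  mem : ∀ m, (rep m).InS
  pairwise : ∀ m m', m ≠ m' → ¬ DiagIso (rep m) (rep m')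
  complete : ∀ σ : Diagram, σ.InS → ∃ m, DiagIso σ (rep m)
  meas : ∀ m i, Measurable (G m i)
  dist : ∀ m i, Measure.map (G m i) P' = gaussianReal 0 (autCard (rep m) : NNReal)
  indep : iIndepFun (fun p : ℕ × ℕ => G p.1 p.2) P'

/-- As `SRep`, with a single coordinate. -/
structure SRep1 {Ω' : Type} [MeasurableSpace Ω'] (P' : Measure Ω') (rep : ℕ → Diagram)
    (G : ℕ → Ω' → ℝ) : Prop where
  mem : ∀ m, (rep m).InS
  pairwise : ∀ m m', m ≠ m' → ¬ DiagIso (rep m) (rep m')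
  complete : ∀ σ : Diagram, σ.InS → ∃ m, DiagIso σ (rep m)
  meas : ∀ m, Measurable (G m)
  dist : ∀ m, Measure.map (G m) P' = gaussianReal 0 (autCard (rep m) : NNReal)
  indep : iIndepFun G P'

/-! ### Products of tree diagrams by matchings of branches -/

/-- Index type of the branches of a family of rooted trees. -/
abbrev BIdx {q : ℕ} (τ : Fin q → Diagram) : Type := Σ j : Fin q, (τ j).V

/-- A partial matching of pairwise-isomorphic root-branches of `τ 0, …, τ (q-1)` with
no two matched branches from the same tree. -/
def IsBMatch {q : ℕ} (τ : Fin q → Diagram) (M : Finset (Sym2 (BIdx τ))) : Prop :=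
  (∀ p ∈ M, ¬ p.IsDiag) ∧
  (∀ p ∈ M, ∀ p' ∈ M, p ≠ p' → ∀ b : BIdx τ, b ∈ p → b ∉ p') ∧
  (∀ b b' : BIdx τ, s(b, b') ∈ M →
    b.1 ≠ b'.1 ∧ (τ b.1).graph.Adj (τ b.1).root b.2 ∧ (τ b'.1).graph.Adj (τ b'.1).root b'.2 ∧
      DiagIso ((τ b.1).branchAt b.2) ((τ b'.1).branchAt b'.2))

/-- `|Aut(σ)|` for a matched pair of isomorphic branches. -/
def pairAut {q : ℕ} (τ : Fin q → Diagram) : Sym2 (BIdx τ) → ℕ :=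
  Sym2.lift ⟨fun b b' => max (autCard ((τ b.1).branchAt b.2)) (autCard ((τ b'.1).branchAt b'.2)),
    fun b b' => max_comm _ _⟩

def matchCoeff {q : ℕ} (τ : Fin q → Diagram) (M : Finset (Sym2 (BIdx τ))) : ℝ :=
  ∏ p ∈ M, (pairAut τ p : ℝ)

/-- A vertex belonging to a matched (hence deleted) branch. -/
def BDeleted {q : ℕ} (τ : Fin q → Diagram) (M : Finset (Sym2 (BIdx τ))) (v : BIdx τ) : Prop :=
  ∃ p ∈ M, ∃ c : (τ v.1).V, (⟨v.1, c⟩ : BIdx τ) ∈ p ∧ v.2 ∈ (τ v.1).branchSet c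

/-- `τ_M`: merge the roots of `τ 0, …, τ (q-1)` and delete all branches matched in `M`. -/
def mergedTree {q : ℕ} (τ : Fin q → Diagram) (M : Finset (Sym2 (BIdx τ))) : Diagram where
  V := Option {v : BIdx τ // v.2 ≠ (τ v.1).root ∧ ¬ BDeleted τ M v}
  fintypeV := Fintype.ofFinite _
  decEqV := inferInstance
  root := none
  edges := (Finset.univ : Finset (Fin q)).val.bind fun j =>
    ((τ j).edges.filter fun e => ∀ w, w ∈ e → w = (τ j).root ∨ ¬ BDeleted τ M ⟨j, w⟩).map
      (Sym2.map fun w =>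
        if h : w ≠ (τ j).root ∧ ¬ BDeleted τ M ⟨j, w⟩ then
          (some ⟨⟨j, w⟩, h⟩ : Option {v : BIdx τ // v.2 ≠ (τ v.1).root ∧ ¬ BDeleted τ M v})
        else none)
  edges2 := 0

/-- The product of a list of tree diagrams (with coefficients), expanded over all
matchings of isomorphic root-branches. -/
def treeListProd (l : List (ℝ × Diagram)) : TreeExpr :=
  ((Finset.univ : Finset (Finset (Sym2 (BIdx fun j : Fin l.length => (l.get j).2)))).filter
      (IsBMatch fun j : Fin l.length => (l.get j).2)).toList.map
    fun M => ((l.map Prod.fst).prod * matchCoeff _ M, mergedTree _ M)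

def scaleTE (c : ℝ) (x : TreeExpr) : TreeExpr := x.map fun p => (c * p.1, p.2)

/-- Application of a polynomial to tree expressions, expanding each monomial via the
matching-product of tree diagrams. -/
def applyPoly {k : ℕ} (f : MvPolynomial (Fin k) ℝ) (xs : Fin k → TreeExpr) : TreeExpr :=
  f.support.toList.flatMap fun d =>
    (List.sections ((List.finRange k).flatMap fun s => List.replicate (d s) (xs s))).flatMap
      fun choice => scaleTE (MvPolynomial.coeff d f) (treeListProd choice)

/-! ### General first-order methods -/

/-- One step of a GFOM: multiply by `A`, or apply a polynomial of the previous states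
componentwise. -/
inductive GFOMStep : ℕ → Type where
  | matmul : {t : ℕ} → GFOMStep t
  | nonlin : {t : ℕ} → MvPolynomial (Fin (t + 1)) ℝ → GFOMStep t

/-- The state `x_t ∈ ℝⁿ` of a GFOM with input matrix `A`; in a `nonlin` step with
polynomial `f`, coordinate `s` of `f` receives `x_{t-s}`. -/
def gfomState {n : ℕ} (steps : (t : ℕ) → GFOMStep t) (A : Matrix (Fin n) (Fin n) ℝ) :
    ℕ → Fin n → ℝ
  | 0 => fun _ => 1
  | t + 1 =>
    match steps t with
    | GFOMStep.matmul => A.mulVec (gfomState steps A t)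
    | GFOMStep.nonlin f => fun i =>
        MvPolynomial.eval (fun s : Fin (t + 1) => gfomState steps A (t - (s : ℕ)) i) f
  termination_by t => t
  decreasing_by all_goals omega

/-- The singleton diagram (representing the all-ones vector). -/
def singletonD : Diagram where
  V := PUnit
  fintypeV := inferInstance
  decEqV := inferInstance
  root := PUnit.unit
  edges := 0
  edges2 := 0

/-- Multiplication by `A` on the trees: `Z_τ ↦ Z_{τ⁺} (+ Z_{τ⁻}` if `τ ∈ 𝒮)`. -/
def stepMul (x : TreeExpr) : TreeExpr :=
  x.flatMap fun p =>
    (p.1, plusD p.2) ::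
      (if h : p.2.RootDeg1 then [(p.1, minusDAux p.2 h.choose h.choose_spec.1)] else [])

/-- The tree approximation `x̂_t` of a GFOM: the GFOM operations performed on the
tree diagrams only. -/
def hatState (steps : (t : ℕ) → GFOMStep t) : ℕ → TreeExpr
  | 0 => [(1, singletonD)]
  | t + 1 =>
    match steps t with
    | GFOMStep.matmul => stepMul (hatState steps t)
    | GFOMStep.nonlin f => applyPoly f fun s : Fin (t + 1) => hatState steps (t - (s : ℕ))
  termination_by t => t
  decreasing_by all_goals omega

/-! ### Belief propagation and approximate message passing -/

/-- Belief propagation messages `m^t_{i→j}` for the nonlinearities `f`; in `f t`,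
coordinate `s ≤ t-1` receives `∑_{k≠j} A_{ik} m^{t-1-s}_{k→i}`, and the last
coordinate receives `m⁰ = 1`. -/
def bpMsg {n : ℕ} (f : (t : ℕ) → MvPolynomial (Fin (t + 1)) ℝ)
    (A : Matrix (Fin n) (Fin n) ℝ) : ℕ → Fin n → Fin n → ℝ
  | 0 => fun _ _ => 1
  | t + 1 => fun i j =>
      MvPolynomial.eval (fun s : Fin (t + 2) =>
        if (s : ℕ) ≤ t then ∑ k ∈ Finset.univ.erase j, A i k * bpMsg f A (t - (s : ℕ)) k i
        else 1) (f (t + 1))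
  termination_by t => t
  decreasing_by all_goals omega

/-- Belief propagation output `m^t_i`. -/
def bpOut {n : ℕ} (f ftil : (t : ℕ) → MvPolynomial (Fin (t + 1)) ℝ)
    (A : Matrix (Fin n) (Fin n) ℝ) (t : ℕ) (i : Fin n) : ℝ :=
  MvPolynomial.eval (fun s : Fin (t + 1) =>
    if (s : ℕ) < t then ∑ k, A i k * bpMsg f A (t - 1 - (s : ℕ)) k i else 1) (ftil t)

/-- The AMP iterates `w^t` with Onsager correction; in `f t`, coordinate `s`
receives `w^{t-s}`. -/
def ampW {n : ℕ} (f : (t : ℕ) → MvPolynomial (Fin (t + 1)) ℝ)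
    (A : Matrix (Fin n) (Fin n) ℝ) : ℕ → Fin n → ℝ
  | 0 => fun _ => 1
  | t + 1 => fun i =>
      A.mulVec (fun k =>
        MvPolynomial.eval (fun s : Fin (t + 1) => ampW f A (t - (s : ℕ)) k) (f t)) i -
      ∑ s : Fin (t + 1),
        (if 1 ≤ (s : ℕ) then
          ((1 / (n : ℝ)) * ∑ k : Fin n,
            MvPolynomial.eval (fun r : Fin (t + 1) => ampW f A (t - (r : ℕ)) k)
              (MvPolynomial.pderiv (⟨t - (s : ℕ), by omega⟩ : Fin (t + 1)) (f t))) *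
          MvPolynomial.eval
            (fun r : Fin (((s : ℕ) - 1) + 1) => ampW f A (((s : ℕ) - 1) - (r : ℕ)) i)
            (f ((s : ℕ) - 1))
        else 0)
  termination_by t => t
  decreasing_by all_goals omega

/-- The AMP output `m^t = f̃_t(w^t, …, w^0)`. -/
def ampOut {n : ℕ} (f ftil : (t : ℕ) → MvPolynomial (Fin (t + 1)) ℝ)
    (A : Matrix (Fin n) (Fin n) ℝ) (t : ℕ) (i : Fin n) : ℝ :=
  MvPolynomial.eval (fun s : Fin (t + 1) => ampW f A (t - (s : ℕ)) i) (ftil t)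

/-! ### Connected components of scalar diagrams -/

def SDiagram.compSet (ρ : SDiagram) (v : ρ.V) : Set ρ.V := {w | ρ.graph.Reachable v w}

/-- The connected component of `v` in `ρ` is isomorphic to the scalar diagram `τ`. -/
def CompIso (ρ : SDiagram) (v : ρ.V) (τ : SDiagram) : Prop :=
  ∃ ψ : τ.V → ρ.V, Function.Injective ψ ∧ Set.range ψ = ρ.compSet v ∧
    τ.edges.map (Sym2.map ψ) = ρ.edges.filter (fun e => ∀ w ∈ e, w ∈ ρ.compSet v) ∧
    τ.edges2.map (Sym2.map ψ) = ρ.edges2.filter (fun e => ∀ w ∈ e, w ∈ ρ.compSet v)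

/-- The number of connected components of `ρ` isomorphic to `τ`. -/
def compCount (ρ τ : SDiagram) : ℕ :=
  Nat.card {K : ρ.graph.ConnectedComponent //
    ∃ v : ρ.V, ρ.graph.connectedComponentMk v = K ∧ CompIso ρ v τ}

/-- The number of connected components of a scalar diagram. -/
def numComps (ρ : SDiagram) : ℕ := Nat.card ρ.graph.ConnectedComponent

/-! ### Debiased power iteration -/

/-- Debiased power iteration: `x₀ = 1`, `x₁ = A·1`, `x_{t+2} = A·x_{t+1} - x_t`. -/
def dpi {n : ℕ} (A : Matrix (Fin n) (Fin n) ℝ) : ℕ → Fin n → ℝ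
  | 0 => fun _ => 1
  | 1 => A.mulVec fun _ => 1
  | t + 2 => fun i => A.mulVec (dpi A (t + 1)) i - dpi A t i

/-- The path with `t` edges, rooted at one endpoint. -/
def pathD (t : ℕ) : Diagram where
  V := Fin (t + 1)
  fintypeV := inferInstance
  decEqV := inferInstance
  root := 0
  edges := (Finset.univ : Finset (Fin t)).val.map fun k =>
    s((k.castSucc : Fin (t + 1)), (k.succ : Fin (t + 1)))
  edges2 := 0


/-- A term which is combinatorially negligible or of combinatorial order 1. -/
def TermOrderLE1 (p : (ℕ → ℝ) × Diagram) : Prop :=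
  NegligibleTerm p.1 p.2 ∨ Order1Term p.1 p.2

/-! Both operations act on the diagram basis by explicit rules: `A · Z_α` is `Z_{α⁺}` plus the
diagrams obtained by contracting the new root of `α⁺` with a vertex of `α`, and `Z_α ⊙ Z_β` is the
sum of `Z_{α_P}` over intersection patterns `P`. Neither rule raises the combinatorial excess
`|V| - 1 - |E| + |I| - 2k` of a term: the new edge of `α⁺` pays for its new vertex, contracting
adds an edge and at most the old root to `I`, and gluing along `m` identified vertices loses `m`
vertices while adding at most `m` vertices to `I`, so excesses (like the exponents of the
coefficients) add up. Hence `A` maps negligible expressions to negligible ones, and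
`x y - x' y' = x (y - y') + (x - x') y'` is negligible when `x ≐ x'`, `y ≐ y'` and `x, y'` have
order at most 1; polynomials follow by induction. -/

open Function

lemma Option.elim_injective_iff {α β : Type*} {f : α → β} {b : β} :
    Injective (fun o : Option α => o.elim b f) ↔ Injective f ∧ b ∉ Set.range f := by
  refine ⟨fun h => ⟨fun x y hxy => Option.some_injective _ (h hxy),
    fun ⟨a, ha⟩ => Option.some_ne_none a (h ha)⟩, fun ⟨hf, hb⟩ => ?_⟩
  rintro (_ | x) (_ | y) hxy
  exacts [rfl, (hb ⟨y, hxy.symm⟩).elim, (hb ⟨x, hxy⟩).elim, congrArg some (hf hxy)]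

lemma Finset.sum_ite_apply_eq_of_injective {α β M : Type*} [Fintype α] [DecidableEq β]
    [AddCommMonoid M] {f : α → β} (hf : Injective f) (b : β) (c : M) :
    ∑ a, (if f a = b then c else 0) = if b ∈ Set.range f then c else 0 := by
  by_cases hb : b ∈ Set.range f
  · obtain ⟨a₀, rfl⟩ := hb
    simp [hf.eq_iff]
  · simp only [hb, if_false]
    exact Finset.sum_eq_zero fun a _ => if_neg fun h => hb ⟨a, h⟩

lemma sym2val_map {V W : Type} {N : ℕ} (A : Matrix (Fin N) (Fin N) ℝ) (φ : W → Fin N)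
    (f : V → W) (e : Sym2 V) : sym2val A φ (e.map f) = sym2val A (φ ∘ f) e := by
  induction e using Sym2.ind with
  | _ a b => rfl

lemma sym2val_mk_of_isSymm {V : Type} {N : ℕ} {A : Matrix (Fin N) (Fin N) ℝ} (hA : A.IsSymm)
    (φ : V → Fin N) (a b : V) : sym2val A φ s(a, b) = A (φ a) (φ b) := by
  simp only [sym2val, Sym2.lift_mk, hA.apply (φ a) (φ b)]
  ring

/-! ### Multiplication by `A` in the diagram basis -/

namespace Diagram

variable {N : ℕ} (A : Matrix (Fin N) (Fin N) ℝ)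

def weight (α : Diagram) (φ : α.V → Fin N) : ℝ :=
  (α.edges.map (sym2val A φ)).prod *
    (α.edges2.map fun e => sym2val A φ e ^ 2 - 1 / (N : ℝ)).prod

lemma Zv_eq_sum_weight (α : Diagram) (i : Fin N) :
    Zv A α i = ∑ φ : α.V → Fin N, if Injective φ ∧ φ α.root = i then α.weight A φ else 0 :=
  rfl

/-- `α⁺` with its new root contracted with `v`. -/
def plusContract (α : Diagram) (v : α.V) : Diagram :=
  { α with root := v, edges := α.edges + {s(α.root, v)} }

lemma weight_plusD (α : Diagram) (ψ : Option α.V → Fin N) :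
    (plusD α).weight A ψ = sym2val A ψ s(none, some α.root) * α.weight A (ψ ∘ some) := by
  simp only [weight, plusD, Multiset.map_add, Multiset.prod_add, Multiset.map_map,
    Multiset.map_singleton, Multiset.prod_singleton, comp_def, sym2val_map]
  ring

lemma weight_plusContract (α : Diagram) (v : α.V) (φ : α.V → Fin N) :
    (α.plusContract v).weight A φ = sym2val A φ s(α.root, v) * α.weight A φ := by
  simp only [weight, plusContract, Multiset.map_add, Multiset.prod_add, Multiset.map_singleton,
    Multiset.prod_singleton]
  ring

lemma mulVec_Zv_eq_sum (α : Diagram) (i : Fin N) :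
    A.mulVec (fun r => Zv A α r) i
      = ∑ φ : α.V → Fin N, if Injective φ then A i (φ α.root) * α.weight A φ else 0 := by
  simp only [Matrix.mulVec, dotProduct, Zv_eq_sum_weight, Finset.mul_sum]
  rw [Finset.sum_comm]
  refine Finset.sum_congr rfl fun φ _ => ?_
  by_cases hφ : Injective φ <;> simp [hφ]

variable {A}

lemma Zv_plusD_eq_sum (hA : A.IsSymm) (α : Diagram) (i : Fin N) :
    Zv A (plusD α) i = ∑ φ : α.V → Fin N,
      if Injective φ ∧ i ∉ Set.range φ then A i (φ α.root) * α.weight A φ else 0 := by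
  symm
  calc _ = ∑ φ : α.V → Fin N, ∑ a : Fin N,
        if Injective (fun o : Option α.V => o.elim a φ) ∧ a = i then
          (plusD α).weight A (fun o => o.elim a φ) else 0 := by
        refine Finset.sum_congr rfl fun φ _ => ?_
        rw [Fintype.sum_eq_single i fun a ha => if_neg fun h => ha h.2]
        simp only [and_true, Option.elim_injective_iff]
        split_ifs
        · rw [eq_comm]
          exact (weight_plusD A α _).trans
            (congrArg (· * _) (sym2val_mk_of_isSymm hA (V := Option α.V) _ none (some α.root)))
        · rfl
    _ = _ := by
        rw [Finset.sum_comm, ← Fintype.sum_prod_type']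
        refine Fintype.sum_equiv (Equiv.piOptionEquivProd (β := fun _ => Fin N)).symm _ _
          fun p => ?_
        have hp : (Equiv.piOptionEquivProd (β := fun _ => Fin N)).symm p =
            fun o => o.elim p.1 p.2 := funext fun o => by cases o <;> rfl
        rw [hp]
        rfl

lemma Zv_plusContract_eq_sum (hA : A.IsSymm) (α : Diagram) (v : α.V) (i : Fin N) :
    Zv A (α.plusContract v) i = ∑ φ : α.V → Fin N,
      if Injective φ ∧ φ v = i then A i (φ α.root) * α.weight A φ else 0 := by
  change ∑ φ : α.V → Fin N,
    (if Injective φ ∧ φ v = i then (α.plusContract v).weight A φ else 0) = _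
  refine Finset.sum_congr rfl fun φ _ => ?_
  by_cases h : Injective φ ∧ φ v = i
  · rw [if_pos h, if_pos h, weight_plusContract, sym2val_mk_of_isSymm hA, ← h.2, hA.apply]
  · rw [if_neg h, if_neg h]

theorem mulVec_Zv (hA : A.IsSymm) (α : Diagram) (i : Fin N) :
    A.mulVec (fun r => Zv A α r) i = Zv A (plusD α) i + ∑ v, Zv A (α.plusContract v) i := by
  simp only [mulVec_Zv_eq_sum, Zv_plusD_eq_sum hA, Zv_plusContract_eq_sum hA]
  rw [Finset.sum_comm, ← Finset.sum_add_distrib]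
  refine Finset.sum_congr rfl fun φ _ => ?_
  by_cases hφ : Injective φ
  · simp only [hφ, true_and, Finset.sum_ite_apply_eq_of_injective hφ]
    by_cases hi : i ∈ Set.range φ <;> simp [hi]
  · simp [hφ]

end Diagram

/-! ### Componentwise products and intersection patterns -/

/-- An intersection pattern of `α` and `β`: `toFun v = some a` identifies the non-root vertex
`v` of `β` with the non-root vertex `a` of `α`; the two roots are always identified. -/
@[ext]
structure Gluing (α β : Diagram) where
  toFun : β.V → Option α.V
  map_root : toFun β.root = none
  ne_root : ∀ v a, toFun v = some a → a ≠ α.root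
  inj : ∀ v w a, toFun v = some a → toFun w = some a → v = w

namespace Gluing

variable {α β : Diagram} (g : Gluing α β)

instance : Finite (Gluing α β) := Finite.of_injective toFun fun _ _ => Gluing.ext

instance : Fintype (Gluing α β) := Fintype.ofFinite _

abbrev Fresh : Type := {w : β.V // w ≠ β.root ∧ g.toFun w = none}

def vertexMap (v : β.V) : α.V ⊕ g.Fresh :=
  if h : v ≠ β.root ∧ g.toFun v = none then Sum.inr ⟨v, h⟩ else Sum.inl ((g.toFun v).getD α.root)

lemma vertexMap_root : g.vertexMap β.root = Sum.inl α.root := by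
  simp [vertexMap, g.map_root]

lemma vertexMap_of_eq_some {v : β.V} {a : α.V} (h : g.toFun v = some a) :
    g.vertexMap v = Sum.inl a := by
  simp [vertexMap, h]

lemma vertexMap_eq_inl_iff {v : β.V} {a : α.V} :
    g.vertexMap v = Sum.inl a ↔ (v = β.root ∧ a = α.root) ∨ g.toFun v = some a := by
  rcases hv : g.toFun v with _ | b
  · by_cases hr : v = β.root
    · subst hr
      simp [vertexMap_root, eq_comm]
    · simp [vertexMap, hr, hv]
  · have hr : v ≠ β.root := fun h => by simp [h, g.map_root] at hv
    simp [vertexMap_of_eq_some g hv, hr]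

lemma vertexMap_eq_inr_iff {v : β.V} {w : g.Fresh} : g.vertexMap v = Sum.inr w ↔ v = w.1 := by
  unfold vertexMap
  split_ifs with h
  · simp [Subtype.ext_iff]
  · simp only [false_iff]
    rintro rfl
    exact h w.2

lemma vertexMap_injective : Injective g.vertexMap := by
  intro v w h
  rcases hw : g.vertexMap w with a | w'
  · rw [hw, vertexMap_eq_inl_iff] at h
    rw [vertexMap_eq_inl_iff] at hw
    rcases h with ⟨rfl, ha⟩ | hv <;> rcases hw with ⟨rfl, ha'⟩ | hw
    · rfl
    · exact (g.ne_root _ _ hw ha).elim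
    · exact (g.ne_root _ _ hv ha').elim
    · exact g.inj _ _ _ hv hw
  · rw [hw, vertexMap_eq_inr_iff] at h
    rw [vertexMap_eq_inr_iff] at hw
    rw [h, hw]

variable {N : ℕ}

/-- The intersection pattern realized by two embeddings sharing the image of the root (and a
dummy pattern otherwise). -/
def ofMaps (φ : α.V → Fin N) (ψ : β.V → Fin N) : Gluing α β :=
  if h : Injective φ ∧ Injective ψ ∧ φ α.root = ψ β.root then
    { toFun := fun v => if v = β.root then none else partialInv φ (ψ v)
      map_root := if_pos rfl
      ne_root := fun v a hv ha => by
        split_ifs at hv with hr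
        exact hr (h.2.1 (((h.1.isPartialInv _ _).1 hv).symm.trans (ha ▸ h.2.2)))
      inj := fun v w a hv hw => by
        split_ifs at hv hw
        exact h.2.1 (((h.1.isPartialInv _ _).1 hv).symm.trans ((h.1.isPartialInv _ _).1 hw)) }
  else ⟨fun _ => none, rfl, by simp, by simp⟩

lemma ofMaps_toFun_eq_some {φ : α.V → Fin N} {ψ : β.V → Fin N}
    (h : Injective φ ∧ Injective ψ ∧ φ α.root = ψ β.root) {v : β.V} {a : α.V} :
    (ofMaps φ ψ).toFun v = some a ↔ v ≠ β.root ∧ φ a = ψ v := by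
  simp only [ofMaps, dif_pos h]
  split_ifs with hr
  · simp [hr]
  · simpa [hr] using h.1.isPartialInv a (ψ v)

variable {φ : α.V → Fin N} {ψ : β.V → Fin N}

lemma sumElim_comp_vertexMap_ofMaps (h : Injective φ ∧ Injective ψ ∧ φ α.root = ψ β.root) :
    Sum.elim φ (ψ ∘ Subtype.val) ∘ (ofMaps φ ψ).vertexMap = ψ := by
  funext v
  rw [comp_apply]
  rcases hv : (ofMaps φ ψ).vertexMap v with a | w
  · rcases ((ofMaps φ ψ).vertexMap_eq_inl_iff).1 hv with ⟨rfl, rfl⟩ | hva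
    · exact h.2.2
    · exact ((ofMaps_toFun_eq_some h).1 hva).2
  · rw [((ofMaps φ ψ).vertexMap_eq_inr_iff).1 hv]
    rfl

lemma injective_sumElim_ofMaps (h : Injective φ ∧ Injective ψ ∧ φ α.root = ψ β.root) :
    Injective (Sum.elim φ (ψ ∘ Subtype.val) : α.V ⊕ (ofMaps φ ψ).Fresh → Fin N) := by
  refine Sum.elim_injective.2 ⟨h.1, h.2.1.comp Subtype.val_injective, fun a w haw => ?_⟩
  have := (ofMaps_toFun_eq_some h).2 ⟨w.2.1, haw⟩
  rw [w.2.2] at this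
  exact Option.some_ne_none a this.symm

lemma ofMaps_comp_inl_vertexMap {χ : α.V ⊕ g.Fresh → Fin N} (hχ : Injective χ) :
    ofMaps (χ ∘ Sum.inl) (χ ∘ g.vertexMap) = g := by
  have h : Injective (χ ∘ Sum.inl) ∧ Injective (χ ∘ g.vertexMap) ∧
      (χ ∘ Sum.inl) α.root = (χ ∘ g.vertexMap) β.root :=
    ⟨hχ.comp Sum.inl_injective, hχ.comp g.vertexMap_injective,
      congrArg χ g.vertexMap_root.symm⟩
  ext v a
  rw [ofMaps_toFun_eq_some h, comp_apply, comp_apply, hχ.eq_iff, eq_comm,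
    vertexMap_eq_inl_iff]
  constructor
  · rintro ⟨hr, ⟨hr', -⟩ | hva⟩
    exacts [(hr hr').elim, hva]
  · intro hva
    refine ⟨fun hr => ?_, Or.inr hva⟩
    rw [hr, g.map_root] at hva
    exact Option.some_ne_none a hva.symm

lemma sumElim_comp_inl_vertexMap (χ : α.V ⊕ g.Fresh → Fin N) :
    Sum.elim (χ ∘ Sum.inl) (χ ∘ g.vertexMap ∘ Subtype.val) = χ := by
  funext x
  rcases x with a | w
  · rfl
  · exact congrArg χ ((g.vertexMap_eq_inr_iff).2 rfl)

end Gluing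

namespace Diagram

variable {N : ℕ}

/-- The contraction `α_P` of the intersection pattern `P = g`. -/
def glue (α β : Diagram) (g : Gluing α β) : Diagram where
  V := α.V ⊕ g.Fresh
  fintypeV := inferInstance
  decEqV := inferInstance
  root := Sum.inl α.root
  edges := α.edges.map (Sym2.map Sum.inl) + β.edges.map (Sym2.map g.vertexMap)
  edges2 := α.edges2.map (Sym2.map Sum.inl) + β.edges2.map (Sym2.map g.vertexMap)

lemma weight_glue (A : Matrix (Fin N) (Fin N) ℝ) (α β : Diagram) (g : Gluing α β)
    (χ : α.V ⊕ g.Fresh → Fin N) :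
    (α.glue β g).weight A χ = α.weight A (χ ∘ Sum.inl) * β.weight A (χ ∘ g.vertexMap) := by
  simp only [weight, glue, Multiset.map_add, Multiset.prod_add, Multiset.map_map, comp_def,
    sym2val_map]
  ring

lemma sum_weight_fiber_ofMaps (A : Matrix (Fin N) (Fin N) ℝ) (α β : Diagram) (g : Gluing α β)
    (i : Fin N) :
    ∑ p : (α.V → Fin N) × (β.V → Fin N) with
        ((Injective p.1 ∧ p.1 α.root = i) ∧ Injective p.2 ∧ p.2 β.root = i) ∧
          Gluing.ofMaps p.1 p.2 = g,
      α.weight A p.1 * β.weight A p.2 = Zv A (α.glue β g) i := by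
  rw [Zv_eq_sum_weight, ← Finset.sum_filter]
  change _ = ∑ χ : α.V ⊕ g.Fresh → Fin N with Injective χ ∧ χ (Sum.inl α.root) = i,
    (α.glue β g).weight A χ
  refine Finset.sum_nbij' (fun p => Sum.elim p.1 (p.2 ∘ Subtype.val))
    (fun χ => (χ ∘ Sum.inl, χ ∘ g.vertexMap)) ?_ ?_ ?_ ?_ ?_
  · rintro ⟨φ, ψ⟩ hp
    simp only [Finset.mem_filter, Finset.mem_univ, true_and] at hp ⊢
    obtain ⟨⟨⟨hφ, hφi⟩, hψ, hψi⟩, rfl⟩ := hp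
    exact ⟨Gluing.injective_sumElim_ofMaps ⟨hφ, hψ, hφi.trans hψi.symm⟩, hφi⟩
  · intro χ hχ
    simp only [Finset.mem_filter, Finset.mem_univ, true_and] at hχ ⊢
    obtain ⟨hχ, hχi⟩ := hχ
    refine ⟨⟨⟨hχ.comp Sum.inl_injective, hχi⟩, hχ.comp g.vertexMap_injective, ?_⟩,
      g.ofMaps_comp_inl_vertexMap hχ⟩
    exact (congrArg χ g.vertexMap_root).trans hχi
  · rintro ⟨φ, ψ⟩ hp
    simp only [Finset.mem_filter, Finset.mem_univ, true_and] at hp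
    obtain ⟨⟨⟨hφ, hφi⟩, hψ, hψi⟩, rfl⟩ := hp
    exact Prod.ext rfl (Gluing.sumElim_comp_vertexMap_ofMaps ⟨hφ, hψ, hφi.trans hψi.symm⟩)
  · intro χ _
    exact g.sumElim_comp_inl_vertexMap χ
  · rintro ⟨φ, ψ⟩ hp
    simp only [Finset.mem_filter, Finset.mem_univ, true_and] at hp
    obtain ⟨⟨⟨hφ, hφi⟩, hψ, hψi⟩, rfl⟩ := hp
    rw [weight_glue, Gluing.sumElim_comp_vertexMap_ofMaps ⟨hφ, hψ, hφi.trans hψi.symm⟩]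
    rfl

theorem Zv_mul_Zv (A : Matrix (Fin N) (Fin N) ℝ) (α β : Diagram) (i : Fin N) :
    Zv A α i * Zv A β i = ∑ g : Gluing α β, Zv A (α.glue β g) i := by
  rw [Zv_eq_sum_weight A α, Zv_eq_sum_weight A β, Finset.sum_mul_sum]
  simp only [ite_zero_mul_ite_zero]
  rw [← Fintype.sum_prod_type', ← Finset.sum_filter,
    ← Finset.sum_fiberwise _ fun p => Gluing.ofMaps p.1 p.2]
  refine Finset.sum_congr rfl fun g _ => ?_
  rw [Finset.filter_filter]
  exact sum_weight_fiber_ofMaps A α β g i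

end Diagram

/-! ### The quantity `|V| - 1 - |E| + |I|` under these operations -/

namespace Diagram

lemma mem_I_iff {α : Diagram} {v : α.V} :
    v ∈ α.I ↔ v ≠ α.root ∧ ∀ e ∈ α.allE, v ∈ e → 2 ≤ α.allE.count e ∨ e.IsDiag := by
  simp [I]

lemma ne_root_of_mem_I {α : Diagram} {v : α.V} (h : v ∈ α.I) : v ≠ α.root :=
  (mem_I_iff.1 h).1

lemma mem_I_of_map_mem_I {α γ : Diagram} {f : α.V → γ.V} (hf : Injective f)
    {R : Multiset (Sym2 γ.V)} (hE : γ.allE = α.allE.map (Sym2.map f) + R) {v : α.V}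
    (hv : v ≠ α.root) (hR : ∀ e ∈ R, f v ∉ e) (h : f v ∈ γ.I) : v ∈ α.I := by
  rw [mem_I_iff] at h ⊢
  refine ⟨hv, fun e he hve => ?_⟩
  have hfe : f v ∈ e.map f := Sym2.mem_map.2 ⟨v, hve, rfl⟩
  have hcount : γ.allE.count (e.map f) = α.allE.count e := by
    rw [hE, Multiset.count_add, Multiset.count_map_eq_count' _ _ (Sym2.map.injective hf),
      Multiset.count_eq_zero_of_notMem fun hm => hR _ hm hfe, add_zero]
  have hmem : e.map f ∈ γ.allE := hE ▸ Multiset.mem_add.2 (Or.inl (Multiset.mem_map_of_mem _ he))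
  rcases h.2 _ hmem hfe with h2 | hd
  · exact Or.inl (hcount ▸ h2)
  · exact Or.inr ((Sym2.isDiag_map hf).1 hd)

lemma allE_plusD (α : Diagram) :
    (plusD α).allE = (α.allE.map (Sym2.map some) : Multiset (Sym2 (plusD α).V)) +
      ({s((plusD α).root, some α.root)} : Multiset (Sym2 (plusD α).V)) := by
  simp only [allE, plusD, Multiset.map_add]
  exact add_right_comm _ _ _

lemma some_root_notMem_I_plusD (α : Diagram) : (some α.root : (plusD α).V) ∉ (plusD α).I := by
  intro h
  have hnew : (plusD α).allE.count s((plusD α).root, some α.root) = 1 := by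
    rw [allE_plusD, Multiset.count_add, Multiset.count_singleton_self, add_eq_right,
      Multiset.count_eq_zero]
    intro hm
    obtain ⟨e, -, he⟩ := Multiset.mem_map.1 hm
    obtain ⟨a, -, ha⟩ := Sym2.mem_map.1 (he ▸ Sym2.mem_mk_left _ _ : none ∈ e.map some)
    exact Option.some_ne_none a ha
  have hmem : s((plusD α).root, some α.root) ∈ (plusD α).allE := by
    rw [allE_plusD]
    exact Multiset.mem_add.2 (Or.inr (Multiset.mem_singleton_self _))
  rcases (mem_I_iff.1 h).2 _ hmem (Sym2.mem_mk_right _ _) with h2 | hd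
  · omega
  · exact Option.some_ne_none _ (Sym2.mk_isDiag_iff.1 hd).symm

lemma card_I_plusD_le (α : Diagram) : (plusD α).I.card ≤ α.I.card := by
  suffices (plusD α).I ⊆ α.I.map ⟨some, Option.some_injective _⟩ from
    (Finset.card_le_card this).trans_eq (Finset.card_map _)
  rintro (_ | w) hw
  · exact (ne_root_of_mem_I hw rfl).elim
  · have hwr : w ≠ α.root := by
      rintro rfl
      exact some_root_notMem_I_plusD α hw
    refine Finset.mem_map_of_mem _ (mem_I_of_map_mem_I (Option.some_injective _) (allE_plusD α)
      hwr ?_ hw)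
    intro e he hwe
    rw [Multiset.mem_singleton.1 he] at hwe
    rcases Sym2.mem_iff.1 hwe with h | h
    exacts [Option.some_ne_none _ h, hwr (Option.some_injective _ h)]

lemma Dval_plusD_le (α : Diagram) : (plusD α).Dval ≤ α.Dval := by
  have hV : Fintype.card (plusD α).V = Fintype.card α.V + 1 := Fintype.card_option
  have hE : (plusD α).nE = α.nE + 1 := by
    simp only [nE, plusD, Multiset.card_add, Multiset.card_map, Multiset.card_singleton]
    ring
  have hI := card_I_plusD_le α
  simp only [Dval, hV, hE]
  push_cast
  omega

lemma I_plusContract_subset (α : Diagram) (v : α.V) :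
    ((α.plusContract v).I : Finset α.V) ⊆ insert α.root α.I := by
  intro w hw
  by_cases hwr : w = α.root
  · exact Finset.mem_insert.2 (Or.inl hwr)
  have hwv : w ≠ v := ne_root_of_mem_I hw
  have hE : (α.plusContract v).allE =
      (α.allE.map (Sym2.map id) + {s(α.root, v)} : Multiset (Sym2 α.V)) := by
    simp only [allE, plusContract, Sym2.map_id, Multiset.map_id]
    abel
  refine Finset.mem_insert_of_mem
    (mem_I_of_map_mem_I (α := α) (γ := α.plusContract v) (f := id) injective_id hE hwr ?_ hw)
  intro e he hwe
  rw [Multiset.mem_singleton.1 he] at hwe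
  rcases Sym2.mem_iff.1 hwe with h | h
  exacts [hwr h, hwv h]

lemma Dval_plusContract_le (α : Diagram) (v : α.V) : (α.plusContract v).Dval ≤ α.Dval := by
  have hE : (α.plusContract v).nE = α.nE + 1 := by
    simp only [nE, plusContract, Multiset.card_add, Multiset.card_singleton]
    ring
  have hI := (Finset.card_le_card (I_plusContract_subset α v)).trans
    (Finset.card_insert_le α.root α.I)
  simp only [Dval, hE]
  push_cast
  change (Fintype.card α.V : ℤ) - 1 - _ + _ ≤ _
  omega

end Diagram

namespace Gluing

variable {α β : Diagram} (g : Gluing α β)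

def domain : Finset β.V := Finset.univ.filter fun v => g.toFun v ≠ none

def image : Finset α.V := Finset.univ.filter fun a => ∃ v, g.toFun v = some a

lemma card_image_le_card_domain : g.image.card ≤ g.domain.card := by
  refine Finset.card_le_card_of_surjOn (fun v => (g.toFun v).getD α.root) fun a ha => ?_
  obtain ⟨v, hv⟩ := (Finset.mem_filter.1 ha).2
  exact ⟨v, by simp [domain, hv], by simp [hv]⟩

lemma card_fresh_add_card_domain : Fintype.card g.Fresh + g.domain.card + 1 = Fintype.card β.V := by
  have hnone : Finset.univ.filter (fun v => g.toFun v = none) =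
      insert β.root (Finset.univ.filter fun v => v ≠ β.root ∧ g.toFun v = none) := by
    ext v
    by_cases hv : v = β.root <;> simp [hv, g.map_root]
  have h := Finset.card_filter_add_card_filter_not (s := Finset.univ) (fun v => g.toFun v = none)
  rw [hnone, Finset.card_insert_of_notMem (by simp), Finset.card_univ] at h
  rw [Fintype.card_subtype, domain, ← h]
  ring

end Gluing

namespace Diagram

variable {α β : Diagram} (g : Gluing α β)

lemma allE_glue : (α.glue β g).allE =
    (β.allE.map (Sym2.map g.vertexMap) : Multiset (Sym2 (α.glue β g).V)) +
      (α.allE.map (Sym2.map Sum.inl) : Multiset (Sym2 (α.glue β g).V)) := by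
  simp only [allE, glue, Multiset.map_add]
  exact (add_add_add_comm _ _ _ _).trans (add_comm _ _)

lemma nE_glue : (α.glue β g).nE = α.nE + β.nE := by
  simp only [nE, glue, Multiset.card_add, Multiset.card_map]
  ring

lemma I_glue_map_subset :
    (α.glue β g).I.map ⟨Sum.map id Subtype.val, Sum.map_injective.2 ⟨injective_id,
      Subtype.val_injective⟩⟩ ⊆ (α.I ∪ g.image).disjSum β.I := by
  intro x hx
  obtain ⟨y, hy, rfl⟩ := Finset.mem_map.1 hx
  rcases y with a | w
  · refine Finset.inl_mem_disjSum.2 ?_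
    by_cases ha : a ∈ g.image
    · exact Finset.mem_union_right _ ha
    have har : a ≠ α.root := by
      rintro rfl
      exact ne_root_of_mem_I hy rfl
    refine Finset.mem_union_left _ (mem_I_of_map_mem_I (α := α) (γ := α.glue β g)
      Sum.inl_injective ((allE_glue g).trans (add_comm _ _)) har (fun e he hae => ?_) hy)
    obtain ⟨e', -, rfl⟩ := Multiset.mem_map.1 he
    obtain ⟨v, -, hv⟩ := Sym2.mem_map.1 hae
    rcases g.vertexMap_eq_inl_iff.1 hv with ⟨-, rfl⟩ | hva
    exacts [har rfl, ha (Finset.mem_filter.2 ⟨Finset.mem_univ _, v, hva⟩)]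
  · refine Finset.inr_mem_disjSum.2 ?_
    have hw : g.vertexMap w.1 ∈ (α.glue β g).I := (g.vertexMap_eq_inr_iff.2 rfl).symm ▸ hy
    refine mem_I_of_map_mem_I (α := β) (γ := α.glue β g) g.vertexMap_injective (allE_glue g)
      w.2.1 (fun e he hwe => ?_) hw
    obtain ⟨e', -, rfl⟩ := Multiset.mem_map.1 he
    obtain ⟨a, -, ha⟩ := Sym2.mem_map.1 hwe
    rw [g.vertexMap_eq_inr_iff.2 rfl] at ha
    exact Sum.inl_ne_inr ha

lemma Dval_glue_le : (α.glue β g).Dval ≤ α.Dval + β.Dval := by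
  have hV : Fintype.card (α.glue β g).V = Fintype.card α.V + Fintype.card g.Fresh :=
    Fintype.card_sum
  have hI : (α.glue β g).I.card ≤ α.I.card + g.image.card + β.I.card := by
    have := (Finset.card_map _).symm.trans_le (Finset.card_le_card (I_glue_map_subset g))
    rw [Finset.card_disjSum] at this
    exact this.trans (Nat.add_le_add_right (Finset.card_union_le _ _) _)
  have := g.card_fresh_add_card_domain
  have := g.card_image_le_card_domain
  simp only [Dval, hV, nE_glue]
  push_cast
  omega

end Diagram

lemma IsThetaHalf.mul {a b : ℕ → ℝ} {j k : ℕ} (ha : IsThetaHalf a j) (hb : IsThetaHalf b k) :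
    IsThetaHalf (fun n => a n * b n) (j + k) := by
  obtain ⟨c₁, c₂, hc₁, hc₂, ha⟩ := ha
  obtain ⟨d₁, d₂, hd₁, hd₂, hb⟩ := hb
  refine ⟨c₁ * d₁, c₂ * d₂, mul_pos hc₁ hd₁, mul_pos hc₂ hd₂, fun n hn => ?_⟩
  have hpow : (n : ℝ) ^ (-((j + k : ℕ) : ℝ) / 2) =
      (n : ℝ) ^ (-(j : ℝ) / 2) * (n : ℝ) ^ (-(k : ℝ) / 2) := by
    rw [← Real.rpow_add (by exact_mod_cast hn)]
    push_cast
    ring_nf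
  obtain ⟨ha₁, ha₂⟩ := ha n hn
  obtain ⟨hb₁, hb₂⟩ := hb n hn
  rw [abs_mul, hpow, mul_mul_mul_comm, mul_mul_mul_comm c₂]
  exact ⟨mul_le_mul ha₁ hb₁ (by positivity) (abs_nonneg _),
    mul_le_mul ha₂ hb₂ (abs_nonneg _) (by positivity)⟩

lemma isThetaHalf_const {c : ℝ} (hc : c ≠ 0) : IsThetaHalf (fun _ => c) 0 :=
  ⟨|c|, |c|, abs_pos.2 hc, abs_pos.2 hc, fun n _ => by simp⟩

lemma Zv_singletonD {N : ℕ} (A : Matrix (Fin N) (Fin N) ℝ) (i : Fin N) : Zv A singletonD i = 1 := by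
  rw [Diagram.Zv_eq_sum_weight]
  change ∑ φ : PUnit → Fin N, _ = _
  rw [← (Equiv.funUnique PUnit (Fin N)).symm.sum_comp]
  simp [Diagram.weight, singletonD, Injective]

lemma Dval_singletonD : singletonD.Dval = 0 := by
  have hI : singletonD.I = ∅ :=
    Finset.eq_empty_of_forall_notMem fun v hv => Diagram.ne_root_of_mem_I hv rfl
  rw [Diagram.Dval, hI]
  rfl

/-- The combinatorial excess `Dval α - j` of a term `a · Z_α` with `a = Θ(n^{-j/2})` is at most
`d`: excess `≤ -1` is negligibility and excess `0` is combinatorial order 1. -/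
def TermExcessLE (d : ℤ) (p : (ℕ → ℝ) × Diagram) : Prop :=
  (∀ n, p.1 n = 0) ∨ ∃ j : ℕ, IsThetaHalf p.1 j ∧ p.2.Dval ≤ j + d

lemma TermOrderLE1.termExcessLE {p : (ℕ → ℝ) × Diagram} (h : TermOrderLE1 p) :
    TermExcessLE 0 p := by
  rcases h with (h | ⟨j, hj, hd⟩) | ⟨j, hj, hd⟩
  · exact Or.inl h
  · exact Or.inr ⟨j, hj, by omega⟩
  · exact Or.inr ⟨j, hj, by omega⟩

namespace TermExcessLE

variable {d e : ℤ} {a b : ℕ → ℝ} {α β : Diagram}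

lemma mono (h : TermExcessLE d (a, α)) (hde : d ≤ e) (hαβ : β.Dval ≤ α.Dval) :
    TermExcessLE e (a, β) := by
  rcases h with h | ⟨j, hj, hd⟩
  · exact Or.inl h
  · exact Or.inr ⟨j, hj, by dsimp only at hd ⊢; omega⟩

lemma glue (ha : TermExcessLE d (a, α)) (hb : TermExcessLE e (b, β)) (g : Gluing α β) :
    TermExcessLE (d + e) (fun n => a n * b n, α.glue β g) := by
  rcases ha with ha | ⟨j, hj, hdj⟩
  · exact Or.inl fun n => by simp [show a n = 0 from ha n]
  rcases hb with hb | ⟨k, hk, hek⟩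
  · exact Or.inl fun n => by simp [show b n = 0 from hb n]
  refine Or.inr ⟨j + k, hj.mul hk, ?_⟩
  have := Diagram.Dval_glue_le g
  dsimp only at hdj hek ⊢
  push_cast
  omega

end TermExcessLE

/-! ### Operations on diagram expressions -/

namespace DiagExpr

variable {N : ℕ} {A : Matrix (Fin N) (Fin N) ℝ} {i : Fin N}

@[simp] lemma eval_nil : DiagExpr.eval [] A i = 0 := rfl

@[simp] lemma eval_cons (p : (ℕ → ℝ) × Diagram) (z : DiagExpr) :
    DiagExpr.eval (p :: z) A i = p.1 N * Zv A p.2 i + z.eval A i := by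
  simp [DiagExpr.eval]

@[simp] lemma eval_append (x y : DiagExpr) : (x ++ y).eval A i = x.eval A i + y.eval A i := by
  simp [DiagExpr.eval]

lemma eval_flatMap {ι : Type*} (l : List ι) (f : ι → DiagExpr) :
    DiagExpr.eval (l.flatMap f) A i = (l.map fun a => (f a).eval A i).sum := by
  induction l with
  | nil => rfl
  | cons a l ih => simp [ih]

lemma eval_map_toList {ι : Type*} [Fintype ι] (a : ℕ → ℝ) (f : ι → Diagram) :
    DiagExpr.eval ((Finset.univ : Finset ι).toList.map fun k => (a, f k)) A i =
      a N * ∑ k, Zv A (f k) i := by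
  rw [DiagExpr.eval, List.map_map, Finset.mul_sum]
  exact Finset.sum_map_toList _ _

def mulVec (z : DiagExpr) : DiagExpr :=
  z.flatMap fun p =>
    (p.1, plusD p.2) :: (Finset.univ : Finset p.2.V).toList.map fun v => (p.1, p.2.plusContract v)

lemma eval_mulVec (hA : A.IsSymm) (z : DiagExpr) :
    z.mulVec.eval A i = A.mulVec (fun r => z.eval A r) i := by
  induction z with
  | nil => simp [mulVec, Matrix.mulVec, dotProduct]
  | cons p z ih =>
    have hsplit : (fun r => DiagExpr.eval (p :: z) A r) =
        p.1 N • (fun r => Zv A p.2 r) + fun r => DiagExpr.eval z A r := by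
      funext r
      simp
    change DiagExpr.eval (((p.1, plusD p.2) :: _) ++ mulVec z) A i = _
    rw [hsplit, Matrix.mulVec_add, Matrix.mulVec_smul, Pi.add_apply, Pi.smul_apply, smul_eq_mul,
      Diagram.mulVec_Zv hA, ← ih, eval_append, eval_cons, eval_map_toList]
    ring

def mul (x y : DiagExpr) : DiagExpr :=
  x.flatMap fun p => y.flatMap fun q =>
    (Finset.univ : Finset (Gluing p.2 q.2)).toList.map
      fun g => (fun n => p.1 n * q.1 n, p.2.glue q.2 g)

lemma eval_mul (x y : DiagExpr) : (x.mul y).eval A i = x.eval A i * y.eval A i := by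
  rw [mul, eval_flatMap, DiagExpr.eval, ← List.sum_map_mul_right]
  congr 1
  refine List.map_congr_left fun p _ => ?_
  rw [eval_flatMap, DiagExpr.eval, ← List.sum_map_mul_left]
  congr 1
  refine List.map_congr_left fun q _ => ?_
  rw [eval_map_toList, ← Diagram.Zv_mul_Zv]
  ring

end DiagExpr

/-! ### Expansions of bounded excess -/

def HasExpansion (d : ℤ) (F : (N : ℕ) → Matrix (Fin N) (Fin N) ℝ → Fin N → ℝ) : Prop :=
  ∃ z : DiagExpr, (∀ p ∈ z, TermExcessLE d p) ∧
    ∀ (N : ℕ) (A : Matrix (Fin N) (Fin N) ℝ), A.IsSymm → ∀ i, F N A i = z.eval A i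

lemma asympEqV_iff_hasExpansion {x y : (N : ℕ) → Matrix (Fin N) (Fin N) ℝ → Fin N → ℝ} :
    AsympEqV x y ↔ HasExpansion (-1) fun N A i => x N A i - y N A i :=
  Iff.rfl

namespace HasExpansion

variable {d e : ℤ} {F G : (N : ℕ) → Matrix (Fin N) (Fin N) ℝ → Fin N → ℝ}

lemma of_eval {z : DiagExpr} (hz : ∀ p ∈ z, TermExcessLE d p) :
    HasExpansion d fun _ A i => z.eval A i :=
  ⟨z, hz, fun _ _ _ _ => rfl⟩

lemma zero : HasExpansion d fun _ _ _ => 0 :=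
  ⟨[], by simp, fun _ _ _ _ => rfl⟩

lemma const (c : ℝ) : HasExpansion 0 fun _ _ _ => c := by
  refine ⟨[(fun _ => c, singletonD)], ?_, fun N A _ i => by simp [Zv_singletonD]⟩
  simp only [List.mem_singleton, forall_eq]
  by_cases hc : c = 0
  · exact Or.inl fun _ => hc
  · exact Or.inr ⟨0, isThetaHalf_const hc, by simp [Dval_singletonD]⟩

lemma congr (hF : HasExpansion d F) (h : ∀ N A i, F N A i = G N A i) : HasExpansion d G := by
  obtain ⟨z, hz, hFz⟩ := hF
  exact ⟨z, hz, fun N A hA i => (h N A i).symm.trans (hFz N A hA i)⟩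

lemma mono (hF : HasExpansion d F) (hde : d ≤ e) : HasExpansion e F := by
  obtain ⟨z, hz, hFz⟩ := hF
  exact ⟨z, fun p hp => (hz p hp).mono hde le_rfl, hFz⟩

lemma add (hF : HasExpansion d F) (hG : HasExpansion d G) :
    HasExpansion d fun N A i => F N A i + G N A i := by
  obtain ⟨x, hx, hFx⟩ := hF
  obtain ⟨y, hy, hGy⟩ := hG
  refine ⟨x ++ y, fun p hp => ?_, fun N A hA i => by simp [hFx N A hA, hGy N A hA]⟩
  rcases List.mem_append.1 hp with hp | hp
  exacts [hx p hp, hy p hp]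

lemma mul (hF : HasExpansion d F) (hG : HasExpansion e G) :
    HasExpansion (d + e) fun N A i => F N A i * G N A i := by
  obtain ⟨x, hx, hFx⟩ := hF
  obtain ⟨y, hy, hGy⟩ := hG
  refine ⟨x.mul y, fun r hr => ?_, fun N A hA i => by
    dsimp only
    rw [DiagExpr.eval_mul, hFx N A hA, hGy N A hA]⟩
  simp only [DiagExpr.mul, List.mem_flatMap, List.mem_map] at hr
  obtain ⟨p, hp, q, hq, g, -, rfl⟩ := hr
  exact (hx p hp).glue (hy q hq) g

lemma mulVec (hF : HasExpansion d F) : HasExpansion d fun N A i => A.mulVec (F N A) i := by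
  obtain ⟨z, hz, hFz⟩ := hF
  refine ⟨z.mulVec, fun r hr => ?_, fun N A hA i => by
    dsimp only
    rw [DiagExpr.eval_mulVec hA, funext (hFz N A hA)]⟩
  simp only [DiagExpr.mulVec, List.mem_flatMap, List.mem_cons, List.mem_map] at hr
  obtain ⟨p, hp, rfl | ⟨v, -, rfl⟩⟩ := hr
  · exact (hz p hp).mono le_rfl (Diagram.Dval_plusD_le p.2)
  · exact (hz p hp).mono le_rfl (Diagram.Dval_plusContract_le p.2 v)

end HasExpansion

section Polynomial

variable {t : ℕ} {x y : Fin t → (N : ℕ) → Matrix (Fin N) (Fin N) ℝ → Fin N → ℝ}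

lemma hasExpansion_eval_mvPolynomial (hx : ∀ s, HasExpansion 0 (x s))
    (f : MvPolynomial (Fin t) ℝ) :
    HasExpansion 0 fun N A i => MvPolynomial.eval (fun s => x s N A i) f := by
  induction f using MvPolynomial.induction_on with
  | C c => exact (HasExpansion.const c).congr fun N A i => by simp
  | add p q hp hq => exact (hp.add hq).congr fun N A i => by simp
  | mul_X p s hp => exact ((hp.mul (hx s)).mono (by norm_num)).congr fun N A i => by simp

lemma hasExpansion_eval_mvPolynomial_sub (hx : ∀ s, HasExpansion 0 (x s))
    (hy : ∀ s, HasExpansion 0 (y s))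
    (hxy : ∀ s, HasExpansion (-1) fun N A i => x s N A i - y s N A i)
    (f : MvPolynomial (Fin t) ℝ) :
    HasExpansion (-1) fun N A i =>
      MvPolynomial.eval (fun s => x s N A i) f - MvPolynomial.eval (fun s => y s N A i) f := by
  induction f using MvPolynomial.induction_on with
  | C c => exact HasExpansion.zero.congr fun N A i => by simp
  | add p q hp hq => exact (hp.add hq).congr fun N A i => by simp only [map_add]; ring
  | mul_X p s hp =>
    -- `p(x) x_s - p(y) y_s = p(x) (x_s - y_s) + (p(x) - p(y)) y_s`
    have h₁ := ((hasExpansion_eval_mvPolynomial hx p).mul (hxy s)).mono (e := -1) (by norm_num)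
    have h₂ := (hp.mul (hy s)).mono (e := -1) (by norm_num)
    exact (h₁.add h₂).congr fun N A i => by simp only [map_mul, MvPolynomial.eval_X]; ring

end Polynomial

/-- asymptotic equality is preserved by multiplication by `A` and by
componentwise polynomials, for diagram expressions of combinatorial order at most 1. -/
theorem statement_10 :
    (∀ x y : DiagExpr, (∀ p ∈ x, TermOrderLE1 p) → (∀ p ∈ y, TermOrderLE1 p) →
      AsympEqE x y →
        AsympEqV (fun _ A i => A.mulVec (fun r => DiagExpr.eval x A r) i)
          (fun _ A i => A.mulVec (fun r => DiagExpr.eval y A r) i)) ∧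
    (∀ (t : ℕ) (x y : Fin t → DiagExpr),
      (∀ s, ∀ p ∈ x s, TermOrderLE1 p) → (∀ s, ∀ p ∈ y s, TermOrderLE1 p) →
      (∀ s, AsympEqE (x s) (y s)) →
      ∀ f : MvPolynomial (Fin t) ℝ,
        AsympEqV (fun _ A i => MvPolynomial.eval (fun s => DiagExpr.eval (x s) A i) f)
          (fun _ A i => MvPolynomial.eval (fun s => DiagExpr.eval (y s) A i) f)) := by
  refine ⟨fun x y _ _ hxy => ?_, fun t x y hx hy hxy f => ?_⟩
  · exact (asympEqV_iff_hasExpansion.1 hxy).mulVec.congr fun N A i =>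
      congrFun (Matrix.mulVec_sub A _ _) i
  · have hexp : ∀ z : Fin t → DiagExpr, (∀ s, ∀ p ∈ z s, TermOrderLE1 p) →
        ∀ s, HasExpansion 0 fun _ A i => (z s).eval A i :=
      fun z hz s => HasExpansion.of_eval fun p hp => (hz s p hp).termExcessLE
    exact hasExpansion_eval_mvPolynomial_sub (hexp x hx) (hexp y hy) hxy f
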